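/- Let v₁,…,vₙ : 2^I → ℝ≥0 be monotone valuations with v_i(∅) = 0, let B₁,…,Bₙ be a partition of I with welfare W = ∑_i v_i(B_i), and set static bundle prices p(B_i) = v_i(B_i)/2. Suppose agents arrive in an arbitrary order and each agent i purchases a set x_i of still-available bundles maximizing u_i(x) = v_i(∪_{B∈x} B) − ∑_{B∈x} p(B) over all sets x of available bundles (with the empty set always available). Then the resulting total welfare ∑_i v_i(∪_{B∈x_i} B) is at least W/2. -/

import Mathlib

/-- The bundle indices still available when the agent at arrival position `k` arrives,
given the sets of bundle indices `x` purchased at each earlier position. -/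
def avail6 {n : ℕ} (x : Fin n → Finset (Fin n)) (k : Fin n) : Finset (Fin n) :=
  Finset.univ \ (Finset.univ.filter (· < k)).biUnion x

/-!
Every buyer can buy nothing, so all utilities are nonnegative. A bundle `Bⱼ` that is never sold
was still available when its owner `j` arrived, so `j`'s utility is at least
`vⱼ(Bⱼ) - p(Bⱼ) = p(Bⱼ)`. Hence `∑ⱼ p(Bⱼ) = W/2` is bounded by total utility plus revenue,
which is the realized welfare.
-/

open Finset Function

/-- Charging each unsold item's price to the utility of a distinct agent. -/
theorem sum_le_sum_add_sum_of_le_of_notMem_biUnion {ι κ : Type*} [Fintype ι] [Fintype κ]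
    [DecidableEq ι] (p : ι → ℝ) (u : κ → ℝ) (x : κ → Finset ι) (e : ι ≃ κ)
    (hdisj : Pairwise (Disjoint on x)) (hu : ∀ k, 0 ≤ u k)
    (hunsold : ∀ j ∉ univ.biUnion x, p j ≤ u (e j)) :
    ∑ j, p j ≤ ∑ k, u k + ∑ k, ∑ j ∈ x k, p j := by
  set S := univ.biUnion x
  have hsold : ∑ j ∈ S, p j = ∑ k, ∑ j ∈ x k, p j := sum_biUnion (hdisj.set_pairwise _)
  have hunsold_sum : ∑ j ∈ Sᶜ, p j ≤ ∑ k, u k :=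
    calc ∑ j ∈ Sᶜ, p j ≤ ∑ j ∈ Sᶜ, u (e j) :=
          sum_le_sum fun j hj => hunsold j (mem_compl.mp hj)
      _ ≤ ∑ j, u (e j) := sum_le_sum_of_subset_of_nonneg (subset_univ _) fun j _ _ => hu _
      _ = ∑ k, u k := e.sum_comp u
  rw [← sum_add_sum_compl S p, hsold]
  linarith

section avail6

variable {n : ℕ} {x : Fin n → Finset (Fin n)}

theorem mem_avail6 {j k : Fin n} : j ∈ avail6 x k ↔ ∀ k' < k, j ∉ x k' := by
  simp [avail6]

theorem pairwise_disjoint_of_subset_avail6 (hx : ∀ k, x k ⊆ avail6 x k) :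
    Pairwise (Disjoint on x) := by
  have hlt : ∀ {a b}, a < b → Disjoint (x a) (x b) := fun hab =>
    disjoint_left.mpr fun _ ha hb => mem_avail6.mp (hx _ hb) _ hab ha
  intro a b hab
  rcases hab.lt_or_gt with h | h
  · exact hlt h
  · exact (hlt h).symm

theorem mem_avail6_of_notMem_biUnion {j : Fin n} (hj : j ∉ univ.biUnion x) (k : Fin n) :
    j ∈ avail6 x k :=
  mem_avail6.mpr fun k' _ hjk' => hj (mem_biUnion.mpr ⟨k', mem_univ _, hjk'⟩)

end avail6

theorem stmt_6 {I : Type*} [DecidableEq I] (n : ℕ)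
    (v : Fin n → Finset I → ℝ)
    (hempty : ∀ i, v i ∅ = 0)
    (B : Fin n → Finset I)
    (σ : Equiv.Perm (Fin n))
    (x : Fin n → Finset (Fin n))
    (hx : ∀ k : Fin n, x k ⊆ avail6 x k ∧
      ∀ y ⊆ avail6 x k,
        v (σ k) (y.biUnion B) - ∑ j ∈ y, v j (B j) / 2 ≤
          v (σ k) ((x k).biUnion B) - ∑ j ∈ x k, v j (B j) / 2) :
    (∑ i, v i (B i)) / 2 ≤ ∑ k, v (σ k) ((x k).biUnion B) := by
  set p : Fin n → ℝ := fun j => v j (B j) / 2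
  set u : Fin n → ℝ := fun k => v (σ k) ((x k).biUnion B) - ∑ j ∈ x k, p j
  have hu : ∀ k, 0 ≤ u k := fun k =>
    sub_nonneg.mpr (by simpa [hempty] using (hx k).2 ∅ (empty_subset _))
  have hunsold : ∀ j ∉ univ.biUnion x, p j ≤ u (σ.symm j) := fun j hj => by
    have h := (hx (σ.symm j)).2 {j} (singleton_subset_iff.mpr (mem_avail6_of_notMem_biUnion hj _))
    simp only [singleton_biUnion, sum_singleton, Equiv.apply_symm_apply] at h
    simp only [u, Equiv.apply_symm_apply]
    linarith [show v j (B j) = 2 * p j by simp only [p]; ring]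
  have key := sum_le_sum_add_sum_of_le_of_notMem_biUnion p u x σ.symm
    (pairwise_disjoint_of_subset_avail6 fun k => (hx k).1) hu hunsold
  rw [sum_div]
  simpa [u, ← sum_add_distrib] using key
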